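/- For every m, n ≥ 1, the cylinder C(2m, 2n+1) = P_{2m} □ C_{2n+1} admits an interval (4m + 2n − 1)-coloring; hence W(C(2m, 2n+1)) ≥ 4m + 2n − 1. -/

import Mathlib

open SimpleGraph

/-- `c` is an interval `t`-coloring of `G`: a proper edge-coloring with colors
`1,…,t`, every color used, and for each vertex the incident colors form an
interval of consecutive integers. -/
def IsIntervalColoring {V : Type*} (G : SimpleGraph V) (t : ℕ) (c : Sym2 V → ℕ) : Prop :=
  (∀ e ∈ G.edgeSet, c e ∈ Finset.Icc 1 t) ∧
  (∀ e₁ ∈ G.edgeSet, ∀ e₂ ∈ G.edgeSet, e₁ ≠ e₂ → (∃ v, v ∈ e₁ ∧ v ∈ e₂) → c e₁ ≠ c e₂) ∧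
  (∀ k ∈ Finset.Icc 1 t, ∃ e ∈ G.edgeSet, c e = k) ∧
  (∀ v : V, ∀ k₁ k₂ k : ℕ,
    (∃ e ∈ G.edgeSet, v ∈ e ∧ c e = k₁) → (∃ e ∈ G.edgeSet, v ∈ e ∧ c e = k₂) →
      k₁ ≤ k → k ≤ k₂ → ∃ e ∈ G.edgeSet, v ∈ e ∧ c e = k)

def HasIntervalColoring {V : Type*} (G : SimpleGraph V) (t : ℕ) : Prop :=
  ∃ c : Sym2 V → ℕ, IsIntervalColoring G t c

/-- `W G`: the greatest number of colors in an interval coloring of `G`. -/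
noncomputable def Wsup {V : Type*} (G : SimpleGraph V) : ℕ :=
  sSup {t | HasIntervalColoring G t}

/-- `w G`: the least number of colors in an interval coloring of `G`. -/
noncomputable def wlow {V : Type*} (G : SimpleGraph V) : ℕ :=
  sInf {t | HasIntervalColoring G t}

/-- The `n`-dimensional hypercube `Q_n`. -/
def hypercube (n : ℕ) : SimpleGraph (Fin n → Bool) where
  Adj u v := ∃! i, u i ≠ v i
  symm := by
    constructor
    rintro u v ⟨i, hi, hu⟩
    exact ⟨i, fun h => hi h.symm, fun j hj => hu j fun h => hj h.symm⟩
  loopless := by constructor; rintro u ⟨i, hi, -⟩; exact hi rfl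

def Hc (n j : ℕ) : ℕ := if j ≤ n then 2*j+2 else 2*(2*n+1-j)+1
def Vc (n j : ℕ) : ℕ := if j ≤ n+1 then 2*j+1 else 2*(2*n+1-j)+2
def ac (n j : ℕ) : ℕ := if j = 0 then 1 else if j ≤ n then 2*j else if j = n+1 then 2*n+1 else 2*(2*n+1-j)+1
def vcol (n i j : ℕ) : ℕ := if i % 2 = 0 then 2*i + Vc n j else 2*(i-1) + ac n j + 3

lemma key (n j pj : ℕ) (hn : 1 ≤ n) (hj : j < 2*n+1) (hpj : pj = if j = 0 then 2*n else j - 1) :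
    (∀ x, (x = Hc n pj ∨ x = Hc n j ∨ x = Vc n j) ↔ (ac n j ≤ x ∧ x ≤ ac n j + 2))
    ∧ Hc n pj ≠ Hc n j ∧ Hc n pj ≠ Vc n j ∧ Hc n j ≠ Vc n j
    ∧ 1 ≤ ac n j ∧ ac n j ≤ 2*n+1 := by
  refine ⟨fun x => ?_, ?_, ?_, ?_, ?_, ?_⟩ <;>
    · simp only [Hc, Vc, ac] at *
      split_ifs at * <;> omega

def hidx {q : ℕ} [NeZero q] (a b : Fin q) : ℕ :=
  if b = a + 1 ∧ ¬ a = b + 1 then a.val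
  else if a = b + 1 ∧ ¬ b = a + 1 then b.val
  else min a.val b.val

lemma hidx_comm {q : ℕ} [NeZero q] (a b : Fin q) : hidx a b = hidx b a := by
  unfold hidx
  split_ifs <;> first | rfl | (exact min_comm _ _) | tauto

def ecol (m n : ℕ) (x y : Fin (2*m) × Fin (2*n+1)) : ℕ :=
  if x.1 = y.1 then 4 * (x.1.val / 2) + Hc n (hidx x.2 y.2)
  else if x.2 = y.2 then vcol n (min x.1.val y.1.val) x.2.val
  else 0

lemma ecol_comm (m n : ℕ) (x y : Fin (2*m) × Fin (2*n+1)) : ecol m n x y = ecol m n y x := by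
  unfold ecol
  by_cases h1 : x.1 = y.1
  · rw [if_pos h1, if_pos h1.symm, h1, hidx_comm]
  · rw [if_neg h1, if_neg (fun h : y.1 = x.1 => h1 h.symm)]
    by_cases h2 : x.2 = y.2
    · rw [if_pos h2, if_pos h2.symm, h2, min_comm]
    · rw [if_neg h2, if_neg (fun h : y.2 = x.2 => h2 h.symm)]

lemma fin_val_one (n : ℕ) (hn : 1 ≤ n) : (1 : Fin (2*n+1)).val = 1 := by
  rw [Fin.val_one', Nat.mod_eq_of_lt (by omega)]

lemma fin_ne_add_two (n : ℕ) (hn : 1 ≤ n) (a : Fin (2*n+1)) : ¬ a = a + 1 + 1 := by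
  intro h
  rw [add_assoc] at h
  have h2 := left_eq_add.mp h
  have h3 : ((1:Fin (2*n+1)) + 1).val = 2 % (2*n+1) := by
    simp [Fin.add_def, fin_val_one n hn]
  have h4 : ((1:Fin (2*n+1)) + 1).val = 0 := by rw [h2]; rfl
  have h5 := Nat.mod_eq_of_lt (show 2 < 2*n+1 by omega)
  omega

lemma sub_one_val (n : ℕ) (hn : 1 ≤ n) (j : Fin (2*n+1)) :
    (j - 1).val = if j.val = 0 then 2*n else j.val - 1 := by
  simp only [Fin.sub_def, fin_val_one n hn, Fin.val_mk]
  have hlt := j.isLt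
  split_ifs with h
  · have h2 : 2*n+1 - 1 + j.val = 2*n := by omega
    rw [h2, Nat.mod_eq_of_lt (by omega)]
  · have h2 : 2*n+1 - 1 + j.val = (j.val - 1) + (2*n+1) := by omega
    rw [h2, Nat.add_mod_right, Nat.mod_eq_of_lt (by omega)]

lemma hidx_next (n : ℕ) (hn : 1 ≤ n) (j : Fin (2*n+1)) : hidx j (j+1) = j.val := by
  unfold hidx
  rw [if_pos ⟨rfl, fin_ne_add_two n hn j⟩]

open Fin.CommRing in
lemma hidx_prev (n : ℕ) (hn : 1 ≤ n) (j : Fin (2*n+1)) : hidx j (j-1) = (j-1).val := by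
  have h1 : ¬ (j - 1 = j + 1) := by
    intro h
    exact fin_ne_add_two n hn j (by rw [← h]; ring)
  have h2 : j = j - 1 + 1 := by ring
  unfold hidx
  rw [if_neg (fun hc => h1 hc.1), if_pos ⟨h2, h1⟩]
open Fin.CommRing in
lemma adj_class (m n : ℕ) (hn : 1 ≤ n) (v w : Fin (2*m) × Fin (2*n+1))
    (h : (pathGraph (2*m) □ cycleGraph (2*n+1)).Adj v w) :
    (w = (v.1, v.2 + 1) ∧ ecol m n v w = 4*(v.1.val/2) + Hc n v.2.val) ∨
    (w = (v.1, v.2 - 1) ∧ ecol m n v w = 4*(v.1.val/2) + Hc n ((v.2 - 1 : Fin (2*n+1)).val)) ∨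
    (w.1.val = v.1.val + 1 ∧ w.2 = v.2 ∧ ecol m n v w = vcol n v.1.val v.2.val) ∨
    (w.1.val + 1 = v.1.val ∧ w.2 = v.2 ∧ ecol m n v w = vcol n (v.1.val - 1) v.2.val) := by
  rw [boxProd_adj] at h
  rcases h with ⟨hp, he⟩ | ⟨hc, he⟩
  · rw [pathGraph_adj] at hp
    have hne : ¬ v.1 = w.1 := by
      intro hh; rw [hh] at hp; omega
    rcases hp with hp | hp
    · refine Or.inr (Or.inr (Or.inl ⟨hp.symm, he.symm, ?_⟩))
      unfold ecol
      rw [if_neg hne, if_pos he]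
      have hmin : min v.1.val w.1.val = v.1.val := by omega
      rw [hmin]
    · refine Or.inr (Or.inr (Or.inr ⟨hp, he.symm, ?_⟩))
      unfold ecol
      rw [if_neg hne, if_pos he]
      have hmin : min v.1.val w.1.val = v.1.val - 1 := by omega
      rw [hmin]
  · rw [cycleGraph_adj'] at hc
    rcases hc with hc | hc
    · -- (v.2 - w.2).val = 1, so w.2 = v.2 - 1
      have h1 : v.2 - w.2 = 1 := Fin.ext (by rw [hc, fin_val_one n hn])
      have h2 := sub_eq_iff_eq_add.mp h1
      have hw : w.2 = v.2 - 1 := eq_sub_iff_add_eq.mpr (by rw [h2]; ring)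
      refine Or.inr (Or.inl ⟨Prod.ext he.symm hw, ?_⟩)
      unfold ecol
      rw [if_pos he, hw, hidx_prev n hn]
    · have h1 : w.2 - v.2 = 1 := Fin.ext (by rw [hc, fin_val_one n hn])
      have h2 := sub_eq_iff_eq_add.mp h1
      have hw : w.2 = v.2 + 1 := by rw [h2]; ring
      refine Or.inl ⟨Prod.ext he.symm hw, ?_⟩
      unfold ecol
      rw [if_pos he, hw, hidx_next n hn]

lemma adjR (m n : ℕ) (hn : 1 ≤ n) (v : Fin (2*m) × Fin (2*n+1)) :
    (pathGraph (2*m) □ cycleGraph (2*n+1)).Adj v (v.1, v.2 + 1) ∧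
      ecol m n v (v.1, v.2 + 1) = 4*(v.1.val/2) + Hc n v.2.val := by
  constructor
  · rw [boxProd_adj]
    refine Or.inr ⟨?_, rfl⟩
    rw [cycleGraph_adj']
    right
    rw [add_sub_cancel_left, fin_val_one n hn]
  · unfold ecol
    rw [if_pos rfl]
    have : hidx v.2 ((v.1, v.2+1) : Fin (2*m) × Fin (2*n+1)).2 = v.2.val := hidx_next n hn v.2
    rw [this]

lemma adjL (m n : ℕ) (hn : 1 ≤ n) (v : Fin (2*m) × Fin (2*n+1)) :
    (pathGraph (2*m) □ cycleGraph (2*n+1)).Adj v (v.1, v.2 - 1) ∧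
      ecol m n v (v.1, v.2 - 1) = 4*(v.1.val/2) + Hc n ((v.2 - 1 : Fin (2*n+1)).val) := by
  constructor
  · rw [boxProd_adj]
    refine Or.inr ⟨?_, rfl⟩
    rw [cycleGraph_adj']
    left
    rw [sub_sub_cancel, fin_val_one n hn]
  · unfold ecol
    rw [if_pos rfl]
    have : hidx v.2 ((v.1, v.2-1) : Fin (2*m) × Fin (2*n+1)).2 = (v.2 - 1 : Fin (2*n+1)).val :=
      hidx_prev n hn v.2
    rw [this]

lemma adjU (m n : ℕ) (v : Fin (2*m) × Fin (2*n+1)) (h : v.1.val + 1 < 2*m) :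
    (pathGraph (2*m) □ cycleGraph (2*n+1)).Adj v (⟨v.1.val + 1, h⟩, v.2) ∧
      ecol m n v (⟨v.1.val + 1, h⟩, v.2) = vcol n v.1.val v.2.val := by
  constructor
  · rw [boxProd_adj]
    refine Or.inl ⟨?_, rfl⟩
    rw [pathGraph_adj]
    left; rfl
  · unfold ecol
    rw [if_neg (by intro hh; have := congrArg Fin.val hh; simp at this), if_pos rfl]
    have hmin : min v.1.val ((⟨v.1.val + 1, h⟩ : Fin (2*m)) : Fin (2*m)).val = v.1.val := by
      simp
    rw [hmin]

lemma adjD (m n : ℕ) (v : Fin (2*m) × Fin (2*n+1)) (h : 0 < v.1.val) :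
    (pathGraph (2*m) □ cycleGraph (2*n+1)).Adj v (⟨v.1.val - 1, by omega⟩, v.2) ∧
      ecol m n v (⟨v.1.val - 1, by omega⟩, v.2) = vcol n (v.1.val - 1) v.2.val := by
  constructor
  · rw [boxProd_adj]
    refine Or.inl ⟨?_, rfl⟩
    rw [pathGraph_adj]
    right; simp; omega
  · unfold ecol
    rw [if_neg (by intro hh; have := congrArg Fin.val hh; simp at this; omega), if_pos rfl]
    have hmin : min v.1.val ((⟨v.1.val - 1, by omega⟩ : Fin (2*m))).val = v.1.val - 1 := by
      simp
    rw [hmin]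
def ccol (m n : ℕ) : Sym2 (Fin (2*m) × Fin (2*n+1)) → ℕ :=
  Sym2.lift ⟨ecol m n, ecol_comm m n⟩

lemma ccol_mk (m n : ℕ) (x y : Fin (2*m) × Fin (2*n+1)) : ccol m n s(x, y) = ecol m n x y := rfl

lemma spectrum_iff (m n : ℕ) (hn : 1 ≤ n) (v : Fin (2*m) × Fin (2*n+1)) (k : ℕ) :
    (∃ e ∈ (pathGraph (2*m) □ cycleGraph (2*n+1)).edgeSet, v ∈ e ∧ ccol m n e = k) ↔
    (k = 4*(v.1.val/2) + Hc n v.2.val ∨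
     k = 4*(v.1.val/2) + Hc n ((v.2 - 1 : Fin (2*n+1)).val) ∨
     (v.1.val + 1 < 2*m ∧ k = vcol n v.1.val v.2.val) ∨
     (0 < v.1.val ∧ k = vcol n (v.1.val - 1) v.2.val)) := by
  constructor
  · rintro ⟨e, he, hv, hk⟩
    obtain ⟨w, rfl⟩ := Sym2.mem_iff_exists.mp hv
    rw [mem_edgeSet] at he
    rw [ccol_mk] at hk
    rcases adj_class m n hn v w he with ⟨_, hcol⟩ | ⟨_, hcol⟩ | ⟨h1, _, hcol⟩ | ⟨h1, _, hcol⟩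
    · exact Or.inl (by rw [← hk, hcol])
    · exact Or.inr (Or.inl (by rw [← hk, hcol]))
    · exact Or.inr (Or.inr (Or.inl ⟨by have := w.1.isLt; omega, by rw [← hk, hcol]⟩))
    · exact Or.inr (Or.inr (Or.inr ⟨by omega, by rw [← hk, hcol]⟩))
  · rintro (hk | hk | ⟨hlt, hk⟩ | ⟨hpos, hk⟩)
    · obtain ⟨ha, hc⟩ := adjR m n hn v
      exact ⟨s(v, (v.1, v.2 + 1)), (mem_edgeSet _).mpr ha, Sym2.mem_mk_left _ _,
        by rw [ccol_mk, hc, ← hk]⟩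
    · obtain ⟨ha, hc⟩ := adjL m n hn v
      exact ⟨s(v, (v.1, v.2 - 1)), (mem_edgeSet _).mpr ha, Sym2.mem_mk_left _ _,
        by rw [ccol_mk, hc, ← hk]⟩
    · obtain ⟨ha, hc⟩ := adjU m n v hlt
      exact ⟨s(v, (⟨v.1.val + 1, hlt⟩, v.2)), (mem_edgeSet _).mpr ha, Sym2.mem_mk_left _ _,
        by rw [ccol_mk, hc, ← hk]⟩
    · obtain ⟨ha, hc⟩ := adjD m n v hpos
      exact ⟨s(v, (⟨v.1.val - 1, by omega⟩, v.2)), (mem_edgeSet _).mpr ha, Sym2.mem_mk_left _ _,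
        by rw [ccol_mk, hc, ← hk]⟩

lemma spectrum_Icc (m n : ℕ) (hm : 1 ≤ m) (hn : 1 ≤ n) (v : Fin (2*m) × Fin (2*n+1)) :
    ∃ A B : ℕ, ∀ k : ℕ,
      (∃ e ∈ (pathGraph (2*m) □ cycleGraph (2*n+1)).edgeSet, v ∈ e ∧ ccol m n e = k) ↔
        (A ≤ k ∧ k ≤ B) := by
  obtain ⟨Kiff, kne1, kne2, kne3, ka1, ka2⟩ :=
    key n v.2.val (v.2 - 1 : Fin (2*n+1)).val hn v.2.isLt (sub_one_val n hn v.2)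
  have hX := (Kiff (Hc n v.2.val)).mp (Or.inr (Or.inl rfl))
  have hP := (Kiff (Hc n ((v.2 - 1 : Fin (2*n+1)).val))).mp (Or.inl rfl)
  have hV := (Kiff (Vc n v.2.val)).mp (Or.inr (Or.inr rfl))
  have hi := v.1.isLt
  refine ⟨(if v.1.val = 0 then ac n v.2.val
           else if v.1.val % 2 = 1 then 2*(v.1.val - 1) + ac n v.2.val
           else 2*v.1.val + ac n v.2.val - 1),
          (if v.1.val % 2 = 1 ∧ v.1.val + 1 < 2*m then 2*(v.1.val - 1) + ac n v.2.val + 3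
           else if v.1.val % 2 = 1 then 2*(v.1.val - 1) + ac n v.2.val + 2
           else if v.1.val = 0 then ac n v.2.val + 2
           else 2*v.1.val + ac n v.2.val + 2), fun k => ?_⟩
  rw [spectrum_iff m n hn v k]
  have Hk1 := Kiff (k - 4*(v.1.val/2))
  simp only [vcol]
  split_ifs <;> omega

lemma ecol_inj (m n : ℕ) (hn : 1 ≤ n) (v w₁ w₂ : Fin (2*m) × Fin (2*n+1))
    (h1 : (pathGraph (2*m) □ cycleGraph (2*n+1)).Adj v w₁)
    (h2 : (pathGraph (2*m) □ cycleGraph (2*n+1)).Adj v w₂)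
    (hne : w₁ ≠ w₂) : ecol m n v w₁ ≠ ecol m n v w₂ := by
  obtain ⟨Kiff, kne1, kne2, kne3, ka1, ka2⟩ :=
    key n v.2.val (v.2 - 1 : Fin (2*n+1)).val hn v.2.isLt (sub_one_val n hn v.2)
  have hX := (Kiff (Hc n v.2.val)).mp (Or.inr (Or.inl rfl))
  have hP := (Kiff (Hc n ((v.2 - 1 : Fin (2*n+1)).val))).mp (Or.inl rfl)
  have hV := (Kiff (Vc n v.2.val)).mp (Or.inr (Or.inr rfl))
  have hi := v.1.isLt
  rcases adj_class m n hn v w₁ h1 with ⟨e1, c1⟩ | ⟨e1, c1⟩ | ⟨e1, e1', c1⟩ | ⟨e1, e1', c1⟩ <;>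
    rcases adj_class m n hn v w₂ h2 with ⟨e2, c2⟩ | ⟨e2, c2⟩ | ⟨e2, e2', c2⟩ | ⟨e2, e2', c2⟩ <;>
      rw [c1, c2] <;>
      first
        | exact absurd (e1.trans e2.symm) hne
        | exact absurd (Prod.ext (Fin.ext (by omega)) (e1'.trans e2'.symm)) hne
        | (simp only [vcol]; split_ifs <;> omega)
        | omega
lemma col_bounds (m n : ℕ) (hm : 1 ≤ m) (hn : 1 ≤ n) :
    ∀ e ∈ (pathGraph (2*m) □ cycleGraph (2*n+1)).edgeSet,
      ccol m n e ∈ Finset.Icc 1 (4*m+2*n-1) := by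
  intro e he
  induction e using Sym2.ind with
  | _ x y =>
    rw [mem_edgeSet] at he
    rw [ccol_mk]
    obtain ⟨Kiff, kne1, kne2, kne3, ka1, ka2⟩ :=
      key n x.2.val (x.2 - 1 : Fin (2*n+1)).val hn x.2.isLt (sub_one_val n hn x.2)
    have hX := (Kiff (Hc n x.2.val)).mp (Or.inr (Or.inl rfl))
    have hP := (Kiff (Hc n ((x.2 - 1 : Fin (2*n+1)).val))).mp (Or.inl rfl)
    have hV := (Kiff (Vc n x.2.val)).mp (Or.inr (Or.inr rfl))
    have hi := x.1.isLt
    have hy := y.1.isLt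
    rw [Finset.mem_Icc]
    rcases adj_class m n hn x y he with ⟨e1, c1⟩ | ⟨e1, c1⟩ | ⟨e1, e1', c1⟩ | ⟨e1, e1', c1⟩ <;>
      rw [c1] <;>
      first
        | (simp only [vcol]; split_ifs <;> omega)
        | omega

lemma col_surj (m n : ℕ) (hm : 1 ≤ m) (hn : 1 ≤ n) :
    ∀ k ∈ Finset.Icc 1 (4*m+2*n-1),
      ∃ e ∈ (pathGraph (2*m) □ cycleGraph (2*n+1)).edgeSet, ccol m n e = k := by
  intro k hk
  rw [Finset.mem_Icc] at hk
  obtain ⟨kp, hkp, hs1, hs2⟩ : ∃ kp, kp + 1 ≤ m ∧ 1 ≤ k - 4*kp ∧ k - 4*kp ≤ 2*n+3 := by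
    by_cases hc : k ≤ 4*m-4
    · exact ⟨(k-1)/4, by omega, by omega, by omega⟩
    · exact ⟨m-1, by omega, by omega, by omega⟩
  have hilt : (2*kp : ℕ) < 2*m := by omega
  by_cases hpar : (k - 4*kp) % 2 = 1
  · have hjlt : (k - 4*kp - 1)/2 < 2*n+1 := by omega
    have hlt : ((⟨2*kp, hilt⟩ : Fin (2*m)),
        (⟨(k - 4*kp - 1)/2, hjlt⟩ : Fin (2*n+1))).1.val + 1 < 2*m := by
      show 2*kp + 1 < 2*m; omega
    obtain ⟨ha, hc⟩ := adjU m n (⟨2*kp, hilt⟩, ⟨(k - 4*kp - 1)/2, hjlt⟩) hlt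
    refine ⟨_, (mem_edgeSet _).mpr ha, ?_⟩
    rw [ccol_mk, hc]
    show vcol n (2*kp) ((k - 4*kp - 1)/2) = k
    simp only [vcol, Vc]
    split_ifs <;> omega
  · have hjlt : (k - 4*kp - 2)/2 < 2*n+1 := by omega
    obtain ⟨ha, hc⟩ := adjR m n hn (⟨2*kp, hilt⟩, ⟨(k - 4*kp - 2)/2, hjlt⟩)
    refine ⟨_, (mem_edgeSet _).mpr ha, ?_⟩
    rw [ccol_mk, hc]
    show 4*((2*kp)/2) + Hc n ((k - 4*kp - 2)/2) = k
    simp only [Hc]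
    split_ifs <;> omega

theorem stmt14 (m n : ℕ) (hm : 1 ≤ m) (hn : 1 ≤ n) :
    HasIntervalColoring (pathGraph (2 * m) □ cycleGraph (2 * n + 1)) (4 * m + 2 * n - 1) ∧
    4 * m + 2 * n - 1 ≤ Wsup (pathGraph (2 * m) □ cycleGraph (2 * n + 1)) := by
  have hcol : HasIntervalColoring (pathGraph (2 * m) □ cycleGraph (2 * n + 1)) (4 * m + 2 * n - 1) := by
    refine ⟨ccol m n, col_bounds m n hm hn, ?_, col_surj m n hm hn, ?_⟩
    · rintro e₁ he₁ e₂ he₂ hne ⟨v, hv1, hv2⟩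
      obtain ⟨w₁, rfl⟩ := Sym2.mem_iff_exists.mp hv1
      obtain ⟨w₂, rfl⟩ := Sym2.mem_iff_exists.mp hv2
      rw [mem_edgeSet] at he₁ he₂
      rw [ccol_mk, ccol_mk]
      exact ecol_inj m n hn v w₁ w₂ he₁ he₂ (fun h => hne (by rw [h]))
    · intro v k₁ k₂ k h₁ h₂ hk1 hk2
      obtain ⟨A, B, hAB⟩ := spectrum_Icc m n hm hn v
      rw [hAB] at h₁ h₂ ⊢
      omega
  refine ⟨hcol, ?_⟩
  have hbdd : BddAbove {t | HasIntervalColoring (pathGraph (2 * m) □ cycleGraph (2 * n + 1)) t} := by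
    refine ⟨Fintype.card (Sym2 (Fin (2*m) × Fin (2*n+1))), fun t' ht' => ?_⟩
    obtain ⟨c, hc1, hc2, hc3, hc4⟩ := ht'
    have hex : ∀ k ∈ Finset.Icc 1 t',
        ∃ e, e ∈ (pathGraph (2 * m) □ cycleGraph (2 * n + 1)).edgeSet ∧ c e = k := by
      intro k hk
      obtain ⟨e, he, hce⟩ := hc3 k hk
      exact ⟨e, he, hce⟩
    choose f hf using hex
    have hcard : (Finset.Icc 1 t').card = t' := by rw [Nat.card_Icc]; omega
    classical
    have hle : (Finset.Icc 1 t').card ≤ (Finset.univ : Finset (Sym2 (Fin (2*m) × Fin (2*n+1)))).card := by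
      refine Finset.card_le_card_of_injOn
        (fun k => if h : k ∈ Finset.Icc 1 t' then f k h
          else s(((⟨0, by omega⟩, ⟨0, by omega⟩) : Fin (2*m) × Fin (2*n+1)),
                 ((⟨0, by omega⟩, ⟨0, by omega⟩) : Fin (2*m) × Fin (2*n+1))))
        (fun k _ => Finset.mem_univ _) ?_
      intro k₁ h₁ k₂ h₂ he
      simp only [Finset.mem_coe] at h₁ h₂
      dsimp only at he
      rw [dif_pos h₁, dif_pos h₂] at he
      have e1 := (hf k₁ h₁).2
      have e2 := (hf k₂ h₂).2
      rw [← e1, ← e2, he]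
    rw [Finset.card_univ] at hle
    omega
  exact le_csSup hbdd hcol
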